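/- arXiv:1606.06213 — 3 statements merged into one kernel-verified Lean document; each statement's English description precedes it below -/
import Mathlib

section
/- Let α ∈ (1,2] and |c| < (π/T)^{α-1}. Then for all u ∈ H^{α/2}_a(0,T), (1/2)(1 - (T/π)^{α-1}|c|) ‖u‖²_{H^{α/2}} ≤ F_c(u) + (1 - (T/π)^{α-1}|c|) Q(u), where ‖u‖²_{H^{α/2}} = 2K(u) + 2Q(u). In particular, any sequence in H^{α/2}_a(0,T) with Q(u_k) = μ fixed and F_c(u_k) bounded is bounded in H^{α/2}. -/
open Real

noncomputable def Qcoef (a : ℤ → ℂ) : ℝ := (1/2) * ∑' n : ℤ, ‖a n‖^2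

noncomputable def Kcoef (T α : ℝ) (a : ℤ → ℂ) : ℝ :=
  (1/2) * ∑' n : ℤ, (π * |(n : ℝ)| / T) ^ α * ‖a n‖^2

noncomputable def Ncoef (T : ℝ) (a : ℤ → ℂ) : ℝ :=
  (1/2) * ∑' n : ℤ, (π * (n : ℝ) / T) * ‖a n‖^2

noncomputable def Pfun (T σ : ℝ) (u : ℝ → ℂ) : ℝ :=
  (1/(2*σ+2)) * ∫ x in (0:ℝ)..T, ‖u x‖ ^ (2*σ+2)

/-- `F_c(u) = K(u) + P(u) + cN(u)`. -/
noncomputable def Ffun (T α σ c : ℝ) (u : ℝ → ℂ) (a : ℤ → ℂ) : ℝ :=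
  Kcoef T α a + Pfun T σ u + c * Ncoef T a

lemma pointwise_mom (T α : ℝ) (hT : 0 < T) (hα₁ : 1 < α) (a : ℤ → ℂ) (n : ℤ) :
    |(π * (n : ℝ) / T) * ‖a n‖^2| ≤ (T/π)^(α-1) * ((π * |(n:ℝ)| / T) ^ α * ‖a n‖^2) := by
  have hπ := pi_pos
  rcases eq_or_ne n 0 with rfl | hn
  · simp [Real.zero_rpow (by linarith : α ≠ 0)]
  · have h1 : (1:ℝ) ≤ |(n:ℝ)| := by
      rw [← Int.cast_abs]; exact_mod_cast Int.one_le_abs hn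
    have hb : (0:ℝ) < π * |(n:ℝ)| / T := by positivity
    have habs : |(π * (n : ℝ) / T) * ‖a n‖^2| = (π * |(n:ℝ)| / T) * ‖a n‖^2 := by
      rw [abs_mul, abs_of_nonneg (by positivity : (0:ℝ) ≤ ‖a n‖^2), abs_div,
        abs_of_pos hT, abs_mul, abs_of_pos hπ]
    rw [habs]
    have hsplit : (π * |(n:ℝ)| / T) ^ α = (π * |(n:ℝ)| / T) ^ (α-1) * (π * |(n:ℝ)| / T) := by
      rw [← Real.rpow_add_one hb.ne' (α-1)]; ring_nf
    rw [hsplit]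
    have hmul : (T/π)^(α-1) * ((π * |(n:ℝ)| / T) ^ (α-1)) = |(n:ℝ)| ^ (α-1) := by
      rw [← Real.mul_rpow (by positivity) hb.le]
      congr 1
      field_simp
    have hrw : (T/π)^(α-1) * ((π * |(n:ℝ)| / T) ^ (α-1) * (π * |(n:ℝ)| / T) * ‖a n‖^2)
        = |(n:ℝ)| ^ (α-1) * ((π * |(n:ℝ)| / T) * ‖a n‖^2) := by
      rw [← hmul]; ring
    rw [hrw]
    have key : (1:ℝ) ≤ |(n:ℝ)| ^ (α-1) := Real.one_le_rpow h1 (by linarith)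
    nlinarith [mul_nonneg hb.le (sq_nonneg ‖a n‖)]

lemma Ncoef_abs_le (T α : ℝ) (hT : 0 < T) (hα₁ : 1 < α) (a : ℤ → ℂ)
    (hsumK : Summable fun n : ℤ => (π * |(n : ℝ)| / T) ^ α * ‖a n‖^2)
    (hsumN : Summable fun n : ℤ => (π * (n : ℝ) / T) * ‖a n‖^2) :
    |Ncoef T a| ≤ (T/π)^(α-1) * Kcoef T α a := by
  have hsumB : Summable fun n : ℤ => (T/π)^(α-1) * ((π * |(n:ℝ)| / T) ^ α * ‖a n‖^2) :=
    hsumK.mul_left _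
  have hub : (∑' n : ℤ, (π * (n : ℝ) / T) * ‖a n‖^2) ≤
      ∑' n : ℤ, (T/π)^(α-1) * ((π * |(n:ℝ)| / T) ^ α * ‖a n‖^2) :=
    Summable.tsum_le_tsum (fun n => (abs_le.1 (pointwise_mom T α hT hα₁ a n)).2) hsumN hsumB
  have hlb : (∑' n : ℤ, -((T/π)^(α-1) * ((π * |(n:ℝ)| / T) ^ α * ‖a n‖^2))) ≤
      ∑' n : ℤ, (π * (n : ℝ) / T) * ‖a n‖^2 :=
    Summable.tsum_le_tsum (fun n => (abs_le.1 (pointwise_mom T α hT hα₁ a n)).1) hsumB.neg hsumN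
  rw [tsum_neg] at hlb
  rw [tsum_mul_left] at hub hlb
  unfold Ncoef Kcoef
  rw [abs_mul, abs_of_nonneg (by norm_num : (0:ℝ) ≤ (1:ℝ)/2)]
  have h := abs_le.2 ⟨hlb, hub⟩
  linarith

lemma Pfun_nonneg (T σ : ℝ) (hT : 0 < T) (hσ : 0 < σ) (u : ℝ → ℂ) : 0 ≤ Pfun T σ u := by
  unfold Pfun
  have h : 0 ≤ ∫ x in (0:ℝ)..T, ‖u x‖ ^ (2*σ+2) :=
    intervalIntegral.integral_nonneg hT.le fun x _ => by positivity
  have : (0:ℝ) < 1/(2*σ+2) := by positivity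
  positivity

lemma key_ineq (T α σ c : ℝ) (hT : 0 < T) (hα₁ : 1 < α) (hσ : 0 < σ)
    (u : ℝ → ℂ) (a : ℤ → ℂ)
    (hsumK : Summable fun n : ℤ => (π * |(n : ℝ)| / T) ^ α * ‖a n‖^2)
    (hsumN : Summable fun n : ℤ => (π * (n : ℝ) / T) * ‖a n‖^2) :
    (1/2) * (1 - (T / π) ^ (α - 1) * |c|) * (2 * Kcoef T α a + 2 * Qcoef a)
        ≤ Ffun T α σ c u a + (1 - (T / π) ^ (α - 1) * |c|) * Qcoef a := by
  have hN := Ncoef_abs_le T α hT hα₁ a hsumK hsumN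
  have hP := Pfun_nonneg T σ hT hσ u
  have hcN : -( |c| * ((T/π)^(α-1) * Kcoef T α a)) ≤ c * Ncoef T a := by
    have h1 : |c * Ncoef T a| ≤ |c| * ((T/π)^(α-1) * Kcoef T α a) := by
      rw [abs_mul]
      exact mul_le_mul_of_nonneg_left hN (abs_nonneg c)
    have h2 := neg_abs_le (c * Ncoef T a)
    linarith
  unfold Ffun
  nlinarith [abs_nonneg c]

/-- For `α ∈ (1,2]` and `|c| < (π/T)^{α-1}`:
`(1/2)(1-(T/π)^{α-1}|c|)‖u‖²_{H^{α/2}} ≤ F_c(u) + (1-(T/π)^{α-1}|c|)Q(u)`, where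
`‖u‖²_{H^{α/2}} = 2K(u)+2Q(u)`.  In particular, any sequence with fixed `Q = μ` and
bounded `F_c` is bounded in `H^{α/2}`. -/
theorem stmt3 (T α σ c : ℝ) (hT : 0 < T) (hα₁ : 1 < α) (hα₂ : α ≤ 2) (hσ : 0 < σ)
    (hc : |c| < (π / T) ^ (α - 1))
    (u : ℝ → ℂ) (a : ℤ → ℂ)
    (hodd : ∀ n : ℤ, Even n → a n = 0)
    (hsumK : Summable fun n : ℤ => (π * |(n : ℝ)| / T) ^ α * ‖a n‖^2)
    (hsumN : Summable fun n : ℤ => (π * (n : ℝ) / T) * ‖a n‖^2) :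
    ((1/2) * (1 - (T / π) ^ (α - 1) * |c|) * (2 * Kcoef T α a + 2 * Qcoef a)
        ≤ Ffun T α σ c u a + (1 - (T / π) ^ (α - 1) * |c|) * Qcoef a) ∧
    (∀ (A : ℕ → ℤ → ℂ) (U : ℕ → ℝ → ℂ) (μ M : ℝ),
      (∀ k, ∀ n : ℤ, Even n → A k n = 0) →
      (∀ k, Summable fun n : ℤ => (π * |(n : ℝ)| / T) ^ α * ‖A k n‖^2) →
      (∀ k, Summable fun n : ℤ => (π * (n : ℝ) / T) * ‖A k n‖^2) →
      (∀ k, Qcoef (A k) = μ) →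
      (∀ k, Ffun T α σ c (U k) (A k) ≤ M) →
      ∃ C, ∀ k, 2 * Kcoef T α (A k) + 2 * Qcoef (A k) ≤ C) := by
  have hπ := pi_pos
  have hβ : (0:ℝ) < (T/π)^(α-1) := Real.rpow_pos_of_pos (by positivity) _
  have hβinv : (π/T)^(α-1) = ((T/π)^(α-1))⁻¹ := by
    rw [← Real.inv_rpow (by positivity : (0:ℝ) ≤ T/π)]
    congr 1
    field_simp
  have hd : 0 < 1 - (T/π)^(α-1) * |c| := by
    have h1 : (T/π)^(α-1) * |c| < (T/π)^(α-1) * ((T/π)^(α-1))⁻¹ := by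
      apply mul_lt_mul_of_pos_left _ hβ
      rw [← hβinv]; exact hc
    rw [mul_inv_cancel₀ hβ.ne'] at h1
    linarith
  refine ⟨key_ineq T α σ c hT hα₁ hσ u a hsumK hsumN, ?_⟩
  intro A U μ M _ hAK hAN hQ hF
  refine ⟨(M + (1 - (T/π)^(α-1) * |c|) * μ) / ((1/2) * (1 - (T/π)^(α-1) * |c|)),
    fun k => ?_⟩
  rw [le_div_iff₀ (by positivity)]
  have hk := key_ineq T α σ c hT hα₁ hσ (U k) (A k) (hAK k) (hAN k)
  rw [hQ k] at hk
  rw [hQ k]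
  have hFk := hF k
  nlinarith [hk, hFk]
end

section
/- Assume K_a(·,t): ℝ → ℝ is even, T-antiperiodic, strictly decreasing on (0,T), and odd about T/2. Then for all x, y ∈ (-T/2, T/2), the symmetrized kernel G(x,y;t) := K_a(x-y,t) + K_a(x+y,t) is strictly positive. -/
/-- If `K_a(·,t)` is even, `T`-antiperiodic, strictly decreasing on `(0,T)` (negative
derivative) and odd about `T/2`, then the symmetrized kernel
`G(x,y;t) = K_a(x-y,t) + K_a(x+y,t)` is strictly positive for `x,y ∈ (-T/2, T/2)`. -/
theorem stmt7 (T t : ℝ) (hT : 0 < T) (ht : 0 < t) (Ka : ℝ → ℝ)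
    (heven : ∀ x, Ka (-x) = Ka x)
    (hanti : ∀ x, Ka (x + T) = -Ka x)
    (hdiff : Differentiable ℝ Ka)
    (hderiv : ∀ x ∈ Set.Ioo 0 T, deriv Ka x < 0)
    (hodd : ∀ x, Ka (T/2 + x) = -Ka (T/2 - x)) :
    ∀ x ∈ Set.Ioo (-(T/2)) (T/2), ∀ y ∈ Set.Ioo (-(T/2)) (T/2),
      0 < Ka (x - y) + Ka (x + y) := by
  intro x hx y hy
  obtain ⟨hx1, hx2⟩ := hx
  obtain ⟨hy1, hy2⟩ := hy
  -- strict antitonicity on [0, T]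
  have hmono : StrictAntiOn Ka (Set.Icc 0 T) :=
    strictAntiOn_of_deriv_neg (convex_Icc 0 T) hdiff.continuous.continuousOn
      (by rw [interior_Icc]; exact hderiv)
  -- Ka (T - a) = - Ka a
  have hrefl : ∀ a : ℝ, Ka (T - a) = -Ka a := by
    intro a
    have h1 : Ka a = -Ka (a - T) := by
      have := hanti (a - T); simpa using this
    have h2 : Ka (a - T) = Ka (T - a) := by
      have := heven (a - T); simpa [neg_sub] using this.symm
    rw [h2] at h1; linarith
  -- key lemma
  have key : ∀ a b : ℝ, 0 ≤ a → 0 ≤ b → a + b < T → 0 < Ka a + Ka b := by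
    intro a b ha hb hab
    have h1 : Ka (T - a) < Ka b := by
      apply hmono ⟨hb, by linarith⟩ ⟨by linarith, by linarith⟩ (by linarith)
    have := hrefl a
    linarith
  -- Ka |z| = Ka z
  have habs : ∀ z : ℝ, Ka |z| = Ka z := by
    intro z
    rcases abs_choice z with h | h
    · rw [h]
    · rw [h, heven]
  have hsum : |x - y| + |x + y| < T := by
    rcases abs_cases (x - y) with ⟨h1, _⟩ | ⟨h1, _⟩ <;>
      rcases abs_cases (x + y) with ⟨h2, _⟩ | ⟨h2, _⟩ <;> linarith
  have := key |x - y| |x + y| (abs_nonneg _) (abs_nonneg _) hsum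
  rwa [habs, habs] at this
end

section
/- Let L be a self-adjoint operator on a Hilbert space with exactly one negative eigenvalue (simple), trivial intersection of its kernel with the span of a fixed vector φ ∉ ker L with φ ⊥ ker L, and suppose L⁻¹φ is well-defined on ker(L)^⊥ with ⟨L⁻¹φ, φ⟩ < 0. Then L restricted to {φ}^⊥ is non-negative: ⟨Lv, v⟩ ≥ 0 for all v ∈ D(L) with ⟨v, φ⟩ = 0. -/
/-!
The quadratic form `⟪L x, x⟫` is nonnegative on the hyperplane `e₁ᗮ`: the component of `x` in
`ker L` does not contribute, and the rest lies in `{e₁, ker L}ᗮ`, where the gap applies.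
If `⟪v, φ⟫ = 0`, then `v` is orthogonal to `w` for this form, since `φ = L w`. Moving `v` into
the hyperplane along `w` gives `0 ≤ ⟪L v, v⟫ + c² ⟪L w, w⟫`, and `⟪L w, w⟫ = ⟪w, φ⟫ < 0`.
-/

open LinearMap (BilinForm ker)
open Submodule
open scoped InnerProductSpace

theorem LinearMap.BilinForm.IsSymm.apply_self_nonneg_of_apply_eq_zero_of_apply_self_neg
    {𝕜 M : Type*} [Field 𝕜] [LinearOrder 𝕜] [IsStrictOrderedRing 𝕜]
    [AddCommGroup M] [Module 𝕜 M] {B : BilinForm 𝕜 M} (hB : B.IsSymm)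
    {f : Module.Dual 𝕜 M} (hf : ∀ x, f x = 0 → 0 ≤ B x x)
    {w v : M} (hw : B w w < 0) (hvw : B v w = 0) : 0 ≤ B v v := by
  have hfw : f w ≠ 0 := fun h => (hf w h).not_gt hw
  set c := f v / f w
  have hker : f (v - c • w) = 0 := by simp [c, hfw]
  have hexpand : B (v - c • w) (v - c • w) = B v v + c ^ 2 * B w w := by
    simp only [map_sub, map_smul, LinearMap.sub_apply, LinearMap.smul_apply, smul_eq_mul,
      hvw, hB.eq w v]
    ring
  nlinarith [hf _ hker, mul_nonpos_of_nonneg_of_nonpos (sq_nonneg c) hw.le]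

section RCLike

variable {𝕜 E : Type*} [RCLike 𝕜] [NormedAddCommGroup E] [InnerProductSpace 𝕜 E]
  {T : E →ₗ[𝕜] E}

theorem LinearMap.IsSymmetric.mem_orthogonal_ker_of_apply_eq_smul (hT : T.IsSymmetric)
    {μ : 𝕜} (hμ : μ ≠ 0) {e : E} (he : T e = μ • e) : e ∈ (ker T)ᗮ := by
  intro k hk
  have : ⟪T k, e⟫_𝕜 = μ * ⟪k, e⟫_𝕜 := by rw [hT, he, inner_smul_right]
  rw [LinearMap.mem_ker.mp hk, inner_zero_left] at this
  exact (mul_eq_zero.mp this.symm).resolve_left hμ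

theorem LinearMap.IsSymmetric.inner_map_starProjection_orthogonal_ker (hT : T.IsSymmetric)
    [(ker T).HasOrthogonalProjection] (x : E) :
    ⟪T ((ker T)ᗮ.starProjection x), (ker T)ᗮ.starProjection x⟫_𝕜 = ⟪T x, x⟫_𝕜 := by
  set k := (ker T).starProjection x
  set m := (ker T)ᗮ.starProjection x
  have hk : T k = 0 := starProjection_apply_mem (ker T) x
  have hmk : ⟪T m, k⟫_𝕜 = 0 := by rw [hT, hk, inner_zero_right]
  conv_rhs => rw [← starProjection_add_starProjection_orthogonal (K := ker T) x]
  rw [map_add, hk, zero_add, inner_add_right, hmk, zero_add]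

end RCLike

section Real

variable {E : Type*} [NormedAddCommGroup E] [InnerProductSpace ℝ E] {T : E →ₗ[ℝ] E}

theorem LinearMap.IsSymmetric.isSymm_innerₗ_comp (hT : T.IsSymmetric) :
    BilinForm.IsSymm (innerₗ E ∘ₗ T) :=
  ⟨fun x y => by simp only [LinearMap.comp_apply, innerₗ_apply_apply, hT x y, real_inner_comm]⟩

theorem LinearMap.IsSymmetric.inner_map_self_nonneg_of_inner_eq_zero (hT : T.IsSymmetric)
    [(ker T).HasOrthogonalProjection] {e : E} (he : e ∈ (ker T)ᗮ)
    (hpos : ∀ m ∈ (ker T)ᗮ, ⟪m, e⟫_ℝ = 0 → 0 ≤ ⟪T m, m⟫_ℝ)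
    {x : E} (hx : ⟪x, e⟫_ℝ = 0) : 0 ≤ ⟪T x, x⟫_ℝ := by
  rw [← hT.inner_map_starProjection_orthogonal_ker]
  refine hpos _ (starProjection_apply_mem _ x) ?_
  rw [inner_starProjection_left_eq_right, starProjection_eq_self_iff.mpr he, hx]

end Real

theorem stmt18_general {H : Type*} [NormedAddCommGroup H] [InnerProductSpace ℝ H]
    [CompleteSpace H]
    (L : H →L[ℝ] H) (hsa : IsSelfAdjoint L)
    (lam₁ δ : ℝ) (hlam₁ : 0 < lam₁) (hδ : 0 < δ)
    (e₁ : H) (hev : L e₁ = (-lam₁) • e₁)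
    (hgap : ∀ v : H, (inner ℝ v e₁ : ℝ) = 0 →
      (∀ k : H, L k = 0 → (inner ℝ v k : ℝ) = 0) →
      δ * ‖v‖^2 ≤ (inner ℝ (L v) v : ℝ))
    (φ w : H)
    (hw : L w = φ)
    (hneg : (inner ℝ w φ : ℝ) < 0) :
    ∀ v : H, (inner ℝ v φ : ℝ) = 0 → 0 ≤ (inner ℝ (L v) v : ℝ) := by
  intro v hv
  have hL : (L : H →ₗ[ℝ] H).IsSymmetric := hsa.isSymmetric
  have : CompleteSpace (ker (L : H →ₗ[ℝ] H)) := L.isClosed_ker.completeSpace_coe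
  have he₁ := hL.mem_orthogonal_ker_of_apply_eq_smul (neg_ne_zero.mpr hlam₁.ne') hev
  have hpos : ∀ m ∈ (ker (L : H →ₗ[ℝ] H))ᗮ, ⟪m, e₁⟫_ℝ = 0 → 0 ≤ ⟪L m, m⟫_ℝ :=
    fun m hm hme => (by positivity : 0 ≤ δ * ‖m‖ ^ 2).trans
      (hgap m hme fun k hk => inner_left_of_mem_orthogonal hk hm)
  refine hL.isSymm_innerₗ_comp.apply_self_nonneg_of_apply_eq_zero_of_apply_self_neg
    (f := innerₗ H e₁) (fun x hx => ?_) (w := w) ?_ ?_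
  · exact hL.inner_map_self_nonneg_of_inner_eq_zero he₁ hpos ((real_inner_comm _ _).trans hx)
  · simpa [hw, real_inner_comm] using hneg
  · rwa [LinearMap.comp_apply, innerₗ_apply_apply, hL v w, ContinuousLinearMap.coe_coe, hw]

/-- [HSS16, Lemma 1]-type result: let `L` be self-adjoint on a real Hilbert space with
exactly one (simple) negative eigenvalue `-λ₁` with unit eigenvector `e₁`, spectral gap
`δ > 0` above `0` (coercivity on `{e₁, ker L}ᗮ`), let `φ ⊥ ker L` with `φ ∉ ker L`, and
let `w ⊥ ker L` solve `Lw = φ` with `⟨w,φ⟩ < 0`.  Then `L` is non-negative on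
`{φ}^⊥`: `⟨Lv, v⟩ ≥ 0` whenever `⟨v, φ⟩ = 0`. -/
theorem stmt18 {H : Type*} [NormedAddCommGroup H] [InnerProductSpace ℝ H]
    [CompleteSpace H]
    (L : H →L[ℝ] H) (hsa : IsSelfAdjoint L)
    (lam₁ δ : ℝ) (hlam₁ : 0 < lam₁) (hδ : 0 < δ)
    (e₁ : H) (he₁ : ‖e₁‖ = 1) (hev : L e₁ = (-lam₁) • e₁)
    (hsimple : ∀ v : H, L v = (-lam₁) • v → ∃ s : ℝ, v = s • e₁)
    (hgap : ∀ v : H, (inner ℝ v e₁ : ℝ) = 0 →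
      (∀ k : H, L k = 0 → (inner ℝ v k : ℝ) = 0) →
      δ * ‖v‖^2 ≤ (inner ℝ (L v) v : ℝ))
    (φ w : H)
    (hφker : ∀ k : H, L k = 0 → (inner ℝ φ k : ℝ) = 0)
    (hφnotker : L φ ≠ 0)
    (hw : L w = φ)
    (hwker : ∀ k : H, L k = 0 → (inner ℝ w k : ℝ) = 0)
    (hneg : (inner ℝ w φ : ℝ) < 0) :
    ∀ v : H, (inner ℝ v φ : ℝ) = 0 → 0 ≤ (inner ℝ (L v) v : ℝ) :=
  stmt18_general L hsa lam₁ δ hlam₁ hδ e₁ hev hgap φ w hw hneg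
end
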